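/- Let G be a topological group, U ⊆ G open, V a Hausdorff topological space, and E a locally convex space. Set U^{[1]} := {(x,γ,t) ∈ U × 𝔏(G) × ℝ : x·γ(t) ∈ U}. A continuous map f : U × V → E is C^{1,0} if and only if there exists a continuous map f^{[1,0]} : U^{[1]} × V → E such that f^{[1,0]}(x,γ,t,y) = (1/t)(f(x·γ(t),y) − f(x,y)) for all (x,γ,t,y) ∈ U^{[1]} × V with t ≠ 0. In this case d^{(1,0)}f(x,y,γ) = f^{[1,0]}(x,γ,0,y) for all x ∈ U, y ∈ V, γ ∈ 𝔏(G). -/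

import Mathlib

/-! The difference quotient `t⁻¹ • (f (x·γ(t)) y - f x y)` is the slope between `0` and `t` of the
curve `s ↦ f (x·γ(s)) y`, whose derivative at `s` is `d^{(1,0)}f (x·γ(s)) y γ`. Extending it by
`d^{(1,0)}f` at `t = 0`, continuity where `t ≠ 0` comes from that of `f`. At `t = 0` it is a mean
value argument: closed convex sets form a neighbourhood basis in a locally convex space, and a slope
lies in every closed convex set containing the derivative along the segment (Hahn–Banach reduces
this to the real mean value theorem). Conversely, `t ↦ f^{[1,0]}(x,γ,t,y)` is continuous at `0`, so
its value there is the limit of the difference quotients. -/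

open Filter Topology Set

/-- The set of continuous one-parameter subgroups `γ : (ℝ,+) → G`, as a subtype of `C(ℝ, G)`
(hence endowed with the compact-open topology). -/
abbrev OneParam (G : Type*) [TopologicalSpace G] [Group G] : Type _ :=
  {γ : C(ℝ, G) // ∀ s t : ℝ, γ (s + t) = γ s * γ t}

/-- `D_γ f(x) = v`, i.e. `(1/t)(f(x·γ(t)) − f(x)) → v` as `t → 0`. -/
def HasDirDeriv {G E : Type*} [TopologicalSpace G] [Group G]
    [AddCommGroup E] [Module ℝ E] [TopologicalSpace E]
    (f : G → E) (x : G) (γ : OneParam G) (v : E) : Prop :=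
  Tendsto (fun t : ℝ => t⁻¹ • (f (x * γ.1 t) - f x)) (𝓝[≠] (0 : ℝ)) (𝓝 v)

/-- `U^{[1]} := {(x,γ,t) ∈ U × 𝔏(G) × ℝ : x·γ(t) ∈ U}`. -/
def sqBrOne {G : Type*} [TopologicalSpace G] [Group G] (U : Set G) :
    Set (G × OneParam G × ℝ) :=
  {p | p.1 ∈ U ∧ p.1 * p.2.1.1 p.2.2 ∈ U}

section LocallyConvex

variable {E : Type*} [AddCommGroup E] [Module ℝ E] [TopologicalSpace E] [IsTopologicalAddGroup E]
  [ContinuousSMul ℝ E] [LocallyConvexSpace ℝ E]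

theorem nhds_hasBasis_convex_closed (v : E) :
    (𝓝 v).HasBasis (fun s => s ∈ 𝓝 v ∧ IsClosed s ∧ Convex ℝ s) id := by
  refine ⟨fun s => ⟨fun hs => ?_, fun ⟨t, ⟨ht, _⟩, hts⟩ => mem_of_superset ht hts⟩⟩
  obtain ⟨c, hc, hc_closed, hcs⟩ := exists_mem_nhds_isClosed_subset hs
  obtain ⟨t, ⟨ht, ht_convex⟩, htc⟩ := (LocallyConvexSpace.convex_basis (𝕜 := ℝ) v).mem_iff.1 hc
  exact ⟨closure t, ⟨mem_of_superset ht subset_closure, isClosed_closure, ht_convex.closure⟩,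
    (closure_minimal htc hc_closed).trans hcs⟩

theorem Convex.slope_mem_of_tendsto_slope {C : Set E} (hC : Convex ℝ C) (hC_closed : IsClosed C)
    {g g' : ℝ → E} {a b : ℝ} (hab : a ≠ b)
    (hg : ∀ s ∈ uIcc a b, Tendsto (slope g s) (𝓝[≠] s) (𝓝 (g' s)))
    (hg'C : ∀ s ∈ uIcc a b, g' s ∈ C) : slope g a b ∈ C := by
  wlog hlt : a < b generalizing a b
  · rw [slope_comm]
    exact this hab.symm (by rwa [uIcc_comm]) (by rwa [uIcc_comm]) (hab.lt_or_gt.resolve_left hlt)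
  by_contra hnot
  obtain ⟨lam, u, hC_lt, hlt_slope⟩ := geometric_hahn_banach_closed_point hC hC_closed hnot
  have lam_slope (s t : ℝ) : lam (slope g s t) = slope (fun s => lam (g s)) s t := by
    simp only [slope_def_module, map_smul, map_sub]
  have hderiv : ∀ s ∈ Icc a b, HasDerivAt (fun s => lam (g s)) (lam (g' s)) s := fun s hs =>
    hasDerivAt_iff_tendsto_slope.2 <| by
      simpa only [Function.comp_def, lam_slope] using
        (lam.continuous.tendsto _).comp (hg s (uIcc_of_lt hlt ▸ hs))
  obtain ⟨c, hc, hc_eq⟩ := exists_hasDerivAt_eq_slope (fun s => lam (g s)) (fun s => lam (g' s))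
    hlt (fun s hs => (hderiv s hs).continuousAt.continuousWithinAt)
    (fun s hs => hderiv s (Ioo_subset_Icc_self hs))
  rw [lam_slope, slope_def_field, ← hc_eq] at hlt_slope
  linarith [hC_lt _ (hg'C c (uIcc_of_lt hlt ▸ Ioo_subset_Icc_self hc))]

end LocallyConvex

theorem eventually_forall_uIcc {α : Type*} [LinearOrder α] [TopologicalSpace α] [OrderTopology α]
    [NoMaxOrder α] [NoMinOrder α] {P : α → Prop} {a : α} (h : ∀ᶠ s in 𝓝 a, P s) :
    ∀ᶠ t in 𝓝 a, ∀ s ∈ uIcc a t, P s := by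
  obtain ⟨l, u, ha, hlu⟩ := mem_nhds_iff_exists_Ioo_subset.1 h
  filter_upwards [Ioo_mem_nhds ha.1 ha.2] with t ht s hs
  exact hlu (ordConnected_Ioo.uIcc_subset ha ht hs)

namespace OneParam

variable {G : Type*} [TopologicalSpace G] [Group G]

theorem apply_zero (γ : OneParam G) : γ.1 0 = 1 := by
  simpa using γ.2 0 0

end OneParam

section DirDeriv

variable {G E : Type*} [TopologicalSpace G] [Group G]
  [AddCommGroup E] [Module ℝ E] [TopologicalSpace E]

theorem HasDirDeriv.tendsto_slope_comp {f : G → E} {x : G} {γ : OneParam G} {s : ℝ} {v : E}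
    (h : HasDirDeriv f (x * γ.1 s) γ v) :
    Tendsto (slope (fun u => f (x * γ.1 u)) s) (𝓝[≠] s) (𝓝 v) := by
  have hshift : map (s + ·) (𝓝[≠] (0 : ℝ)) = 𝓝[≠] s := by simp
  rw [← hshift, tendsto_map'_iff]
  refine h.congr fun t => ?_
  simp only [Function.comp_apply, slope_def_module, add_sub_cancel_left, γ.2, mul_assoc]

end DirDeriv

section SqBrOne

variable {G : Type*} [TopologicalSpace G] [Group G] {U : Set G}

theorem mk_zero_mem_sqBrOne {x : G} (hx : x ∈ U) (γ : OneParam G) : (x, γ, 0) ∈ sqBrOne U :=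
  ⟨hx, by rwa [OneParam.apply_zero, mul_one]⟩

theorem isOpen_sqBrOne [ContinuousMul G] (hU : IsOpen U) : IsOpen (sqBrOne U) :=
  (hU.preimage continuous_fst).inter
    (hU.preimage (by fun_prop : Continuous fun p : G × OneParam G × ℝ => p.1 * p.2.1.1 p.2.2))

end SqBrOne

section Main

variable {G X E : Type*} [Group G] [TopologicalSpace G] [TopologicalSpace X]
  [AddCommGroup E] [Module ℝ E] [TopologicalSpace E] {U : Set G} {f : G → X → E}

theorem hasDirDeriv_of_sqBrOneMap [ContinuousMul G] (hU : IsOpen U)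
    {F : G × OneParam G × ℝ → X → E}
    (hFc : ContinuousOn (fun q : (G × OneParam G × ℝ) × X => F q.1 q.2)
      (sqBrOne U ×ˢ (univ : Set X)))
    (hF : ∀ p ∈ sqBrOne U, p.2.2 ≠ 0 → ∀ y : X,
      F p y = (p.2.2)⁻¹ • (f (p.1 * p.2.1.1 p.2.2) y - f p.1 y))
    {x : G} (hx : x ∈ U) (y : X) (γ : OneParam G) :
    HasDirDeriv (fun x' => f x' y) x γ (F (x, γ, 0) y) := by
  have hF_at : ContinuousAt (fun t : ℝ => F (x, γ, t) y) 0 :=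
    (hFc.continuousAt (((isOpen_sqBrOne hU).prod isOpen_univ).mem_nhds
      ⟨mk_zero_mem_sqBrOne hx γ, trivial⟩)).comp
      (by fun_prop : Continuous fun t : ℝ => ((x, γ, t), y)).continuousAt
  have hU_near : ∀ᶠ t in 𝓝 (0 : ℝ), x * γ.1 t ∈ U :=
    (by fun_prop : Continuous fun t => x * γ.1 t).continuousAt.eventually_mem
      (by simpa [OneParam.apply_zero] using hU.mem_nhds hx)
  refine (hF_at.tendsto.mono_left nhdsWithin_le_nhds).congr' ?_
  filter_upwards [nhdsWithin_le_nhds hU_near, self_mem_nhdsWithin] with t htU ht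
  exact hF (x, γ, t) ⟨hx, htU⟩ ht y

variable (f) in
/-- `f^{[1,0]}`, built from a candidate `d` for `d^{(1,0)}f`. -/
noncomputable def diffQuotientExt (d : G → X → OneParam G → E) (p : G × OneParam G × ℝ) (y : X) :
    E :=
  if p.2.2 = 0 then d p.1 y p.2.1 else (p.2.2)⁻¹ • (f (p.1 * p.2.1.1 p.2.2) y - f p.1 y)

theorem continuousAt_diffQuotientExt_of_ne_zero [ContinuousMul G] [IsTopologicalAddGroup E]
    [ContinuousSMul ℝ E] (hU : IsOpen U)
    (hf : ContinuousOn (fun p : G × X => f p.1 p.2) (U ×ˢ (univ : Set X)))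
    (d : G → X → OneParam G → E) {q : (G × OneParam G × ℝ) × X} (hq : q.1 ∈ sqBrOne U)
    (ht : q.1.2.2 ≠ 0) :
    ContinuousAt (fun q : (G × OneParam G × ℝ) × X => diffQuotientExt f d q.1 q.2) q := by
  have hf_at {p : G × X} (hp : p.1 ∈ U) : ContinuousAt (fun p : G × X => f p.1 p.2) p :=
    hf.continuousAt ((hU.prod isOpen_univ).mem_nhds ⟨hp, trivial⟩)
  have ht_at : ContinuousAt (fun q : (G × OneParam G × ℝ) × X => q.1.2.2) q := by fun_prop
  have hquot : ContinuousAt (fun q : (G × OneParam G × ℝ) × X =>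
      (q.1.2.2)⁻¹ • (f (q.1.1 * q.1.2.1.1 q.1.2.2) q.2 - f q.1.1 q.2)) q :=
    (ht_at.inv₀ ht).smul
      (((hf_at hq.2).comp (by fun_prop : Continuous fun q : (G × OneParam G × ℝ) × X =>
          (q.1.1 * q.1.2.1.1 q.1.2.2, q.2)).continuousAt).sub
        ((hf_at hq.1).comp (by fun_prop : Continuous fun q : (G × OneParam G × ℝ) × X =>
          (q.1.1, q.2)).continuousAt))
  refine hquot.congr ?_
  filter_upwards [ht_at.eventually_ne ht] with q' ht'
  exact (if_neg ht').symm

theorem continuousAt_diffQuotientExt_zero [ContinuousMul G] [IsTopologicalAddGroup E]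
    [ContinuousSMul ℝ E] [LocallyConvexSpace ℝ E] (hU : IsOpen U)
    {d : G → X → OneParam G → E}
    (hd : ∀ x ∈ U, ∀ (y : X) (γ : OneParam G), HasDirDeriv (fun x' => f x' y) x γ (d x y γ))
    (hdc : ContinuousOn (fun p : G × X × OneParam G => d p.1 p.2.1 p.2.2)
      (U ×ˢ (univ : Set (X × OneParam G))))
    {x : G} (hx : x ∈ U) (y : X) (γ : OneParam G) :
    ContinuousAt (fun q : (G × OneParam G × ℝ) × X => diffQuotientExt f d q.1 q.2)
      ((x, γ, 0), y) := by
  have hv : diffQuotientExt f d (x, γ, 0) y = d x y γ := if_pos rfl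
  rw [ContinuousAt, hv, (nhds_hasBasis_convex_closed _).tendsto_right_iff]
  rintro C ⟨hC, hC_closed, hC_convex⟩
  let Ψ : ((G × OneParam G × ℝ) × X) × ℝ → G × X × OneParam G :=
    fun qs => (qs.1.1.1 * qs.1.1.2.1.1 qs.2, qs.1.2, qs.1.1.2.1)
  have hΨ : ContinuousAt Ψ (((x, γ, 0), y), 0) := by fun_prop
  have hΨ₀ : Ψ (((x, γ, 0), y), 0) = (x, y, γ) := by simp [Ψ, OneParam.apply_zero]
  have hUX : U ×ˢ (univ : Set (X × OneParam G)) ∈ 𝓝 (x, y, γ) :=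
    (hU.prod isOpen_univ).mem_nhds ⟨hx, trivial⟩
  have hcurve : ∀ᶠ qs in 𝓝 ((x, γ, 0), y) ×ˢ 𝓝 0,
      Ψ qs ∈ U ×ˢ (univ : Set (X × OneParam G)) ∧ d (Ψ qs).1 (Ψ qs).2.1 (Ψ qs).2.2 ∈ C := by
    rw [← nhds_prod_eq]
    refine (hΨ.eventually_mem (hΨ₀ ▸ hUX)).and ?_
    exact ((hdc.continuousAt hUX).comp_of_eq hΨ hΨ₀).eventually_mem (by simpa [hΨ₀] using hC)
  obtain ⟨pq, hpq, ps, hps, hP⟩ := eventually_prod_iff.1 hcurve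
  have ht : Tendsto (fun q : (G × OneParam G × ℝ) × X => q.1.2.2) (𝓝 ((x, γ, 0), y)) (𝓝 0) :=
    (by fun_prop : Continuous fun q : (G × OneParam G × ℝ) × X => q.1.2.2).tendsto _
  filter_upwards [hpq, ht.eventually (eventually_forall_uIcc hps)]
    with ⟨⟨x', γ', t⟩, y'⟩ hq hs
  have hkey (s : ℝ) (hs' : s ∈ uIcc 0 t) := hP hq (hs s hs')
  by_cases ht0 : t = 0
  · subst ht0
    simpa [Ψ, diffQuotientExt, OneParam.apply_zero] using (hkey 0 (by simp)).2
  · have hslope :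
        slope (fun s => f (x' * γ'.1 s) y') 0 t = diffQuotientExt f d (x', γ', t) y' := by
      simp [slope_def_module, diffQuotientExt, ht0, OneParam.apply_zero]
    rw [← hslope]
    exact hC_convex.slope_mem_of_tendsto_slope hC_closed (Ne.symm ht0)
      (fun s hs' => (hd _ (hkey s hs').1.1 y' γ').tendsto_slope_comp) (fun s hs' => (hkey s hs').2)

theorem continuousOn_diffQuotientExt [ContinuousMul G] [IsTopologicalAddGroup E]
    [ContinuousSMul ℝ E] [LocallyConvexSpace ℝ E] (hU : IsOpen U)
    (hf : ContinuousOn (fun p : G × X => f p.1 p.2) (U ×ˢ (univ : Set X)))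
    {d : G → X → OneParam G → E}
    (hd : ∀ x ∈ U, ∀ (y : X) (γ : OneParam G), HasDirDeriv (fun x' => f x' y) x γ (d x y γ))
    (hdc : ContinuousOn (fun p : G × X × OneParam G => d p.1 p.2.1 p.2.2)
      (U ×ˢ (univ : Set (X × OneParam G)))) :
    ContinuousOn (fun q : (G × OneParam G × ℝ) × X => diffQuotientExt f d q.1 q.2)
      (sqBrOne U ×ˢ (univ : Set X)) := by
  rintro ⟨⟨x, γ, t⟩, y⟩ ⟨hq, -⟩
  refine ContinuousAt.continuousWithinAt ?_
  by_cases ht : t = 0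
  · subst ht
    exact continuousAt_diffQuotientExt_zero hU hd hdc hq.1 y γ
  · exact continuousAt_diffQuotientExt_of_ne_zero hU hf d hq ht

end Main

theorem isC10_iff_exists_sqBrOneMap_general
    {G X E : Type*} [Group G] [TopologicalSpace G] [IsTopologicalGroup G]
    [TopologicalSpace X]
    [AddCommGroup E] [Module ℝ E] [TopologicalSpace E] [IsTopologicalAddGroup E]
    [ContinuousSMul ℝ E] [LocallyConvexSpace ℝ E]
    (U : Set G) (hU : IsOpen U) (f : G → X → E)
    (hf : ContinuousOn (fun p : G × X => f p.1 p.2) (U ×ˢ (univ : Set X))) :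
    ((∃ d10 : G → X → OneParam G → E,
        (∀ x ∈ U, ∀ (y : X) (γ : OneParam G),
          HasDirDeriv (fun x' => f x' y) x γ (d10 x y γ)) ∧
        ContinuousOn (fun p : G × X × OneParam G => d10 p.1 p.2.1 p.2.2)
          (U ×ˢ (univ : Set (X × OneParam G)))) ↔
      (∃ F : G × OneParam G × ℝ → X → E,
        ContinuousOn (fun q : (G × OneParam G × ℝ) × X => F q.1 q.2)
          (sqBrOne U ×ˢ (univ : Set X)) ∧
        ∀ p ∈ sqBrOne U, p.2.2 ≠ 0 → ∀ y : X,
          F p y = (p.2.2)⁻¹ • (f (p.1 * p.2.1.1 p.2.2) y - f p.1 y))) ∧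
    (∀ F : G × OneParam G × ℝ → X → E,
      ContinuousOn (fun q : (G × OneParam G × ℝ) × X => F q.1 q.2)
        (sqBrOne U ×ˢ (univ : Set X)) →
      (∀ p ∈ sqBrOne U, p.2.2 ≠ 0 → ∀ y : X,
        F p y = (p.2.2)⁻¹ • (f (p.1 * p.2.1.1 p.2.2) y - f p.1 y)) →
      ∀ x ∈ U, ∀ (y : X) (γ : OneParam G),
        HasDirDeriv (fun x' => f x' y) x γ (F (x, γ, 0) y)) := by
  refine ⟨⟨fun ⟨d, hd, hdc⟩ => ?_, fun ⟨F, hFc, hF⟩ => ?_⟩,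
    fun F hFc hF x hx => hasDirDeriv_of_sqBrOneMap hU hFc hF hx⟩
  · exact ⟨diffQuotientExt f d, continuousOn_diffQuotientExt hU hf hd hdc,
      fun p _ hp _ => if_neg hp⟩
  · refine ⟨fun x y γ => F (x, γ, 0) y, fun x hx => hasDirDeriv_of_sqBrOneMap hU hFc hF hx, ?_⟩
    refine hFc.comp (by fun_prop : Continuous fun p : G × X × OneParam G =>
      ((p.1, p.2.2, (0 : ℝ)), p.2.1)).continuousOn ?_
    exact fun p hp => ⟨mk_zero_mem_sqBrOne hp.1 _, trivial⟩

/-- A continuous map `f : U × V → E` (with `V` a Hausdorff topological space)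
is `C^{1,0}` if and only if there is a continuous map `f^{[1,0]} : U^{[1]} × V → E` with
`f^{[1,0]}(x,γ,t,y) = (1/t)(f(x·γ(t),y) − f(x,y))` for `t ≠ 0`; in this case
`d^{(1,0)}f(x,y,γ) = f^{[1,0]}(x,γ,0,y)`. -/
theorem isC10_iff_exists_sqBrOneMap
    {G X E : Type*} [Group G] [TopologicalSpace G] [IsTopologicalGroup G]
    [TopologicalSpace X] [T2Space X]
    [AddCommGroup E] [Module ℝ E] [TopologicalSpace E] [IsTopologicalAddGroup E]
    [ContinuousSMul ℝ E] [LocallyConvexSpace ℝ E] [T2Space E]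
    (U : Set G) (hU : IsOpen U) (f : G → X → E)
    (hf : ContinuousOn (fun p : G × X => f p.1 p.2) (U ×ˢ (univ : Set X))) :
    ((∃ d10 : G → X → OneParam G → E,
        (∀ x ∈ U, ∀ (y : X) (γ : OneParam G),
          HasDirDeriv (fun x' => f x' y) x γ (d10 x y γ)) ∧
        ContinuousOn (fun p : G × X × OneParam G => d10 p.1 p.2.1 p.2.2)
          (U ×ˢ (univ : Set (X × OneParam G)))) ↔
      (∃ F : G × OneParam G × ℝ → X → E,
        ContinuousOn (fun q : (G × OneParam G × ℝ) × X => F q.1 q.2)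
          (sqBrOne U ×ˢ (univ : Set X)) ∧
        ∀ p ∈ sqBrOne U, p.2.2 ≠ 0 → ∀ y : X,
          F p y = (p.2.2)⁻¹ • (f (p.1 * p.2.1.1 p.2.2) y - f p.1 y))) ∧
    (∀ F : G × OneParam G × ℝ → X → E,
      ContinuousOn (fun q : (G × OneParam G × ℝ) × X => F q.1 q.2)
        (sqBrOne U ×ˢ (univ : Set X)) →
      (∀ p ∈ sqBrOne U, p.2.2 ≠ 0 → ∀ y : X,
        F p y = (p.2.2)⁻¹ • (f (p.1 * p.2.1.1 p.2.2) y - f p.1 y)) →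
      ∀ x ∈ U, ∀ (y : X) (γ : OneParam G),
        HasDirDeriv (fun x' => f x' y) x γ (F (x, γ, 0) y)) :=
  isC10_iff_exists_sqBrOneMap_general U hU f hf
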